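/- arXiv:1309.2545 — 7 statements merged into one kernel-verified Lean document; each statement's English description precedes it below -/
import Mathlib

section
/- For every nonempty finite set X ⊆ {0,1}^n, there exists a family F of at most n·|X| faces of the cube [0,1]^n such that {0,1}^n \ X equals the union over F ∈ F of F ∩ {0,1}^n, and no face in F contains a point of X. -/
/-- The face of `[0,1]^n` determined by fixing the coordinates in `S` to the values of `a`. -/
def cubeFace (n : ℕ) (S : Finset (Fin n)) (a : Fin n → ℝ) : Set (Fin n → ℝ) :=
  {x | (∀ i, 0 ≤ x i ∧ x i ≤ 1) ∧ ∀ i ∈ S, x i = a i}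

/-- For every nonempty finite X ⊆ {0,1}^n there is a family of at most n·|X| faces of the
cube [0,1]^n whose union of binary points is {0,1}^n \ X, no face meeting X. -/
theorem separating_faces (n : ℕ) (X : Finset (Fin n → ℝ))
    (hX : X.Nonempty) (hXbin : ∀ v ∈ X, ∀ i, v i = 0 ∨ v i = 1) :
    ∃ 𝓕 : Finset (Finset (Fin n) × (Fin n → ℝ)),
      𝓕.card ≤ n * X.card ∧
      (∀ p ∈ 𝓕, ∀ i ∈ p.1, p.2 i = 0 ∨ p.2 i = 1) ∧
      ({x : Fin n → ℝ | ∀ i, x i = 0 ∨ x i = 1} \ ↑X =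
        ⋃ p ∈ 𝓕, (cubeFace n p.1 p.2 ∩ {x | ∀ i, x i = 0 ∨ x i = 1})) ∧
      ∀ p ∈ 𝓕, ∀ v ∈ X, v ∉ cubeFace n p.1 p.2 := by
  classical
  -- the flipped point
  set A : (Fin n → ℝ) → Fin n → (Fin n → ℝ) :=
    fun v i => Function.update v i (1 - v i) with hA
  set P : (Fin n → ℝ) × Fin n → Prop :=
    fun q => ∀ w ∈ X, ¬ ∀ j ≤ q.2, w j = A q.1 q.2 j with hP
  set 𝓕 : Finset (Finset (Fin n) × (Fin n → ℝ)) :=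
    ((X ×ˢ (Finset.univ : Finset (Fin n))).filter P).image
      (fun q => (Finset.Iic q.2, A q.1 q.2)) with h𝓕
  refine ⟨𝓕, ?_, ?_, ?_, ?_⟩
  · calc 𝓕.card ≤ ((X ×ˢ (Finset.univ : Finset (Fin n))).filter P).card :=
          Finset.card_image_le
      _ ≤ (X ×ˢ (Finset.univ : Finset (Fin n))).card := Finset.card_filter_le _ _
      _ = X.card * n := by simp [Finset.card_product]
      _ = n * X.card := Nat.mul_comm _ _
  · rintro p hp i hi
    simp only [h𝓕, Finset.mem_image, Finset.mem_filter, Finset.mem_product] at hp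
    obtain ⟨⟨v, i₀⟩, ⟨⟨hv, -⟩, -⟩, rfl⟩ := hp
    simp only at hi ⊢
    rcases eq_or_ne i i₀ with rfl | hne
    · simp only [hA, Function.update_self]
      rcases hXbin v hv i with h | h <;> simp [h]
    · simp only [hA, Function.update_of_ne hne]
      exact hXbin v hv i
  · ext x
    simp only [Set.mem_diff, Set.mem_setOf_eq, Set.mem_iUnion, Set.mem_inter_iff,
      Finset.mem_coe]
    constructor
    · rintro ⟨hxbin, hxX⟩
      -- min disagreement index of w with x
      set m : (Fin n → ℝ) → WithTop (Fin n) :=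
        fun w => (Finset.univ.filter (fun j => w j ≠ x j)).min with hm
      obtain ⟨v, hvX, hvmax⟩ := X.exists_max_image m hX
      have hvne : v ≠ x := fun h => hxX (h ▸ hvX)
      obtain ⟨j₀, hj₀⟩ := Function.ne_iff.mp hvne
      have hne : (Finset.univ.filter (fun j => v j ≠ x j)).Nonempty :=
        ⟨j₀, by simp [hj₀]⟩
      obtain ⟨i, hi⟩ := Finset.min_of_nonempty hne
      have hiX : v i ≠ x i := by
        have := Finset.mem_of_min hi
        simpa using this
      have hlt : ∀ j, j < i → v j = x j := by
        intro j hj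
        by_contra hj'
        have : (i : WithTop (Fin n)) ≤ (j : WithTop (Fin n)) := by
          rw [← hi]; exact Finset.min_le (by simp [hj'])
        exact absurd (WithTop.coe_le_coe.mp this) (not_le.mpr hj)
      -- a agrees with x on Iic i
      have hax : ∀ j ≤ i, A v i j = x j := by
        intro j hj
        rcases eq_or_lt_of_le hj with rfl | hj'
        · simp only [hA, Function.update_self]
          rcases hXbin v hvX j with h | h <;> rcases hxbin j with h' | h' <;>
            simp_all
        · simp only [hA, Function.update_of_ne (ne_of_lt hj')]
          exact hlt j hj'
      have hPvi : P (v, i) := by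
        intro w hwX hw
        have hwne : w ≠ x := fun h => hxX (h ▸ hwX)
        obtain ⟨k₀, hk₀⟩ := Function.ne_iff.mp hwne
        have hwnonempty : (Finset.univ.filter (fun j => w j ≠ x j)).Nonempty :=
          ⟨k₀, by simp [hk₀]⟩
        obtain ⟨k, hk⟩ := Finset.min_of_nonempty hwnonempty
        have hkX : w k ≠ x k := by simpa using Finset.mem_of_min hk
        have hle : m w ≤ m v := hvmax w hwX
        rw [hm] at hle
        simp only [hk, hi] at hle
        have hki : k ≤ i := WithTop.coe_le_coe.mp hle
        exact hkX (by rw [hw k hki, hax k hki])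
      refine ⟨(Finset.Iic i, A v i), ?_, ?_, hxbin⟩
      · simp only [h𝓕, Finset.mem_image, Finset.mem_filter, Finset.mem_product]
        exact ⟨(v, i), ⟨⟨hvX, Finset.mem_univ _⟩, hPvi⟩, rfl⟩
      · refine ⟨fun j => ?_, ?_⟩
        · rcases hxbin j with h | h <;> simp [h]
        · intro j hj
          exact ((hax j (Finset.mem_Iic.mp hj)).symm)
    · rintro ⟨p, hp, hx, hxbin⟩
      refine ⟨hxbin, fun hxX => ?_⟩
      simp only [h𝓕, Finset.mem_image, Finset.mem_filter, Finset.mem_product] at hp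
      obtain ⟨⟨v, i⟩, ⟨-, hPq⟩, rfl⟩ := hp
      exact hPq x hxX (fun j hj => hx.2 j (Finset.mem_Iic.mpr hj))
  · rintro p hp w hwX hw
    simp only [h𝓕, Finset.mem_image, Finset.mem_filter, Finset.mem_product] at hp
    obtain ⟨⟨v, i⟩, ⟨-, hPq⟩, rfl⟩ := hp
    exact hPq w hwX (fun j hj => hw.2 j (Finset.mem_Iic.mpr hj))
end

section
/- Let P₁,...,P_k be nonempty polytopes in R^n, each given as P_i = {x : ∃ y_i ≥ 0, E_i x + F_i y_i = h_i}. Then conv(P₁ ∪ ... ∪ P_k) = {x : ∃ x_i ∈ R^n, y_i ≥ 0, λ ∈ R^k_{≥0}, x = Σ x_i, E_i x_i + F_i y_i = λ_i h_i for all i, Σ λ_i = 1}. -/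
/-- A bounded set containing a full ray in direction `d` forces `d = 0`. -/
lemma balas_bounded_dir {n : ℕ} {S : Set (Fin n → ℝ)}
    (hb : Bornology.IsBounded S) {z d : Fin n → ℝ}
    (hz : ∀ t : ℝ, 0 ≤ t → z + t • d ∈ S) : d = 0 := by
  obtain ⟨C, hC⟩ := isBounded_iff_forall_norm_le.1 hb
  by_contra hd
  have hdn : 0 < ‖d‖ := norm_pos_iff.2 hd
  set t : ℝ := (C + ‖z‖ + 1) / ‖d‖ with ht
  have hC0 : 0 ≤ C := le_trans (norm_nonneg z) (hC z (by simpa using hz 0 le_rfl))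
  have ht0 : 0 ≤ t := by positivity
  have h1 : ‖t • d‖ = C + ‖z‖ + 1 := by
    rw [norm_smul, Real.norm_of_nonneg ht0, ht, div_mul_cancel₀]
    exact ne_of_gt hdn
  have h2 : ‖t • d‖ ≤ ‖z + t • d‖ + ‖z‖ := by
    calc ‖t • d‖ = ‖(z + t • d) - z‖ := by ring_nf
    _ ≤ ‖z + t • d‖ + ‖z‖ := norm_sub_le _ _
  have h3 : ‖z + t • d‖ ≤ C := hC _ (hz t ht0)
  have hzn : 0 ≤ ‖z‖ := norm_nonneg z
  linarith

/-- Balas' disjunctive programming: if P₁,…,P_k are nonempty polytopes (bounded), with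
P_i = {x : ∃ y ≥ 0, E_i x + F_i y = h_i}, then conv(⋃ P_i) equals the projection of the
extended formulation {(x, x_i, y_i, λ) : x = Σ x_i, E_i x_i + F_i y_i = λ_i h_i,
Σ λ_i = 1, y_i ≥ 0, λ ≥ 0}. -/
theorem balas_disjunctive_programming (k n : ℕ) (m p : Fin k → ℕ)
    (E : ∀ i, Matrix (Fin (m i)) (Fin n) ℝ) (F : ∀ i, Matrix (Fin (m i)) (Fin (p i)) ℝ)
    (h : ∀ i, Fin (m i) → ℝ)
    (P : Fin k → Set (Fin n → ℝ))
    (hP : ∀ i, P i = {x | ∃ y : Fin (p i) → ℝ, 0 ≤ y ∧ (E i).mulVec x + (F i).mulVec y = h i})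
    (hne : ∀ i, (P i).Nonempty) (hbdd : ∀ i, Bornology.IsBounded (P i)) :
    convexHull ℝ (⋃ i, P i) =
      {x | ∃ (xs : ∀ i : Fin k, Fin n → ℝ) (ys : ∀ i : Fin k, Fin (p i) → ℝ) (lam : Fin k → ℝ),
        x = ∑ i, xs i ∧
        (∀ i, (E i).mulVec (xs i) + (F i).mulVec (ys i) = lam i • h i) ∧
        (∑ i, lam i) = 1 ∧ (∀ i, 0 ≤ ys i) ∧ 0 ≤ lam} := by
  apply le_antisymm
  · -- conv(⋃ P_i) ⊆ RHS : RHS is convex and contains each P_i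
    apply convexHull_min
    · rintro x hx
      rw [Set.mem_iUnion] at hx
      obtain ⟨i, hxi⟩ := hx
      rw [hP i] at hxi
      obtain ⟨y, hy0, hy⟩ := hxi
      refine ⟨fun j => if hij : j = i then x else 0,
        fun j => if hij : j = i then hij ▸ y else 0,
        fun j => if j = i then 1 else 0, ?_, ?_, ?_, ?_, ?_⟩
      · simp [Finset.sum_dite_eq']
      · intro j
        by_cases hij : j = i
        · subst hij; simp [hy]
        · simp [hij, Matrix.mulVec_zero]
      · simp [Finset.sum_ite_eq']
      · intro j
        by_cases hij : j = i
        · subst hij; simpa using hy0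
        · simp [hij]
      · intro j
        by_cases hij : j = i <;> simp [hij]
    · -- convexity of RHS
      rintro x ⟨xs, ys, lam, hx, heq, hsum, hys, hlam⟩
        x' ⟨xs', ys', lam', hx', heq', hsum', hys', hlam'⟩ a b ha hb hab
      refine ⟨fun i => a • xs i + b • xs' i, fun i => a • ys i + b • ys' i,
        fun i => a * lam i + b * lam' i, ?_, ?_, ?_, ?_, ?_⟩
      · rw [Finset.sum_add_distrib, ← Finset.smul_sum, ← Finset.smul_sum, hx, hx']
      · intro i
        rw [Matrix.mulVec_add, Matrix.mulVec_add, Matrix.mulVec_smul, Matrix.mulVec_smul,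
          Matrix.mulVec_smul, Matrix.mulVec_smul]
        have := heq i
        have := heq' i
        calc a • (E i).mulVec (xs i) + b • (E i).mulVec (xs' i) +
              (a • (F i).mulVec (ys i) + b • (F i).mulVec (ys' i))
            = a • ((E i).mulVec (xs i) + (F i).mulVec (ys i)) +
              b • ((E i).mulVec (xs' i) + (F i).mulVec (ys' i)) := by
              rw [smul_add, smul_add]; abel
          _ = a • (lam i • h i) + b • (lam' i • h i) := by rw [heq i, heq' i]
          _ = (a * lam i + b * lam' i) • h i := by
              rw [smul_smul, smul_smul, add_smul]
      · rw [Finset.sum_add_distrib, ← Finset.mul_sum, ← Finset.mul_sum, hsum, hsum']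
        simpa using hab
      · intro i
        exact add_nonneg (smul_nonneg ha (hys i)) (smul_nonneg hb (hys' i))
      · intro i
        exact add_nonneg (mul_nonneg ha (hlam i)) (mul_nonneg hb (hlam' i))
  · -- RHS ⊆ conv(⋃ P_i)
    rintro x ⟨xs, ys, lam, hx, heq, hsum, hys, hlam⟩
    set z : Fin k → (Fin n → ℝ) :=
      fun i => if lam i = 0 then (hne i).some else (lam i)⁻¹ • xs i with hz
    have hzP : ∀ i, z i ∈ P i := by
      intro i
      by_cases h0 : lam i = 0
      · simp only [hz, h0, if_true]; exact (hne i).some_mem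
      · simp only [hz, h0, if_false]
        rw [hP i]
        refine ⟨(lam i)⁻¹ • ys i, smul_nonneg (inv_nonneg.2 (hlam i)) (hys i), ?_⟩
        rw [Matrix.mulVec_smul, Matrix.mulVec_smul, ← smul_add, heq i, smul_smul,
          inv_mul_cancel₀ h0, one_smul]
    have hzx : ∀ i, lam i • z i = xs i := by
      intro i
      by_cases h0 : lam i = 0
      · -- boundedness: xs i = 0
        have hxi0 : xs i = 0 := by
          obtain ⟨z₀, hz₀⟩ := hne i
          rw [hP i] at hz₀
          obtain ⟨y₀, hy₀0, hy₀⟩ := hz₀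
          refine balas_bounded_dir (hbdd i) (z := z₀) (d := xs i) (fun t ht => ?_)
          rw [hP i]
          refine ⟨y₀ + t • ys i, ?_, ?_⟩
          · exact add_nonneg hy₀0 (smul_nonneg ht (hys i))
          · rw [Matrix.mulVec_add, Matrix.mulVec_add, Matrix.mulVec_smul, Matrix.mulVec_smul]
            have h2 : (E i).mulVec (xs i) + (F i).mulVec (ys i) = 0 := by
              rw [heq i, h0, zero_smul]
            calc (E i).mulVec z₀ + t • (E i).mulVec (xs i) +
                  ((F i).mulVec y₀ + t • (F i).mulVec (ys i))
                = ((E i).mulVec z₀ + (F i).mulVec y₀) +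
                  t • ((E i).mulVec (xs i) + (F i).mulVec (ys i)) := by
                  rw [smul_add]; abel
              _ = h i := by rw [hy₀, h2, smul_zero, add_zero]
        rw [h0, hxi0, zero_smul]
      · simp only [hz, h0, if_false, smul_smul, mul_inv_cancel₀ h0, one_smul]
    have : x = ∑ i, lam i • z i := by
      rw [hx]; exact Finset.sum_congr rfl (fun i _ => (hzx i).symm)
    rw [this]
    exact (convex_convexHull ℝ _).sum_mem (fun i _ => hlam i) hsum
      (fun i _ => subset_convexHull ℝ _ (Set.mem_iUnion.2 ⟨i, hzP i⟩))
end

section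
/- Let a ∈ Z^n_{≥0}, b ∈ Z_{≥0}, and P = {x ∈ [0,1]^n : 2a^⊤x ≤ 2b+1}. Then a vertex x of P is non-integral if and only if 2a^⊤x = 2b+1; consequently {x ∈ {0,1}^n : a^⊤x ≤ b} = V(P) \ V(F), where F is the face of P defined by 2a^⊤x = 2b+1. -/
/-!
An extreme point of `P` with slack in the knapsack inequality is a local extreme point of the
cube `[0,1]ⁿ`, hence a global one (the cube is convex), hence a 0/1 point. Conversely, on a
0/1 point the value `a⊤x` is an integer, so `2a⊤x` is even: it never equals `2b + 1`, and
`2a⊤x ≤ 2b + 1` there is the same as `a⊤x ≤ b`.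
-/

open Set Filter Topology

section Extreme

variable {E : Type*} [AddCommGroup E] [Module ℝ E] [TopologicalSpace E]
  [IsTopologicalAddGroup E] [ContinuousSMul ℝ E]

theorem mem_extremePoints_of_mem_extremePoints_inter_of_mem_nhds {A B : Set E} {x : E}
    (hA : Convex ℝ A) (hB : B ∈ 𝓝 x) (hx : x ∈ (A ∩ B).extremePoints ℝ) :
    x ∈ A.extremePoints ℝ := by
  refine ⟨hx.1.1, fun y hy z hz hxyz => ?_⟩
  have hnear : ∀ w, ∀ᶠ t in 𝓝[>] (0 : ℝ), AffineMap.lineMap x w t ∈ B := fun w =>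
    nhdsWithin_le_nhds <| (AffineMap.lineMap_continuous.tendsto' 0 x (by simp)).eventually_mem hB
  obtain ⟨t, ⟨hyB, hzB⟩, ht0, ht1⟩ :=
    ((hnear y).and (hnear z)).and (Ioo_mem_nhdsGT one_pos) |>.exists
  have hx_shrunk : x ∈ openSegment ℝ (AffineMap.lineMap x y t) (AffineMap.lineMap x z t) := by
    simp only [← AffineMap.homothety_eq_lineMap, ← image_openSegment]
    exact ⟨x, hxyz, AffineMap.homothety_apply_same x t⟩
  have hy_shrunk := hx.2 ⟨hA.lineMap_mem hx.1.1 hy ⟨ht0.le, ht1.le⟩, hyB⟩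
    ⟨hA.lineMap_mem hx.1.1 hz ⟨ht0.le, ht1.le⟩, hzB⟩ hx_shrunk
  exact ((AffineMap.lineMap_eq_left_iff.mp hy_shrunk).resolve_right ht0.ne').symm

theorem mem_extremePoints_of_mem_extremePoints_inter_setOf_le {K : Set E} {f : E → ℝ}
    {c : ℝ} {x : E} (hK : Convex ℝ K) (hf : Continuous f)
    (hx : x ∈ (K ∩ {y | f y ≤ c}).extremePoints ℝ) (hlt : f x < c) :
    x ∈ K.extremePoints ℝ :=
  mem_extremePoints_of_mem_extremePoints_inter_of_mem_nhds hK
    (mem_of_superset ((isOpen_lt hf continuous_const).mem_nhds hlt)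
      fun _ hy => le_of_lt (α := ℝ) hy) hx

end Extreme

theorem mem_extremePoints_unitCube_iff {ι : Type*} {x : ι → ℝ} :
    x ∈ (univ.pi fun _ : ι => Icc (0 : ℝ) 1).extremePoints ℝ ↔
      ∀ i, x i = 0 ∨ x i = 1 := by
  simp only [extremePoints_pi, extremePoints_Icc zero_le_one, mem_univ_pi, mem_insert_iff,
    mem_singleton_iff]

theorem exists_intCast_eq_sum_mul_of_binary {ι : Type*} [Fintype ι] (a : ι → ℤ)
    {x : ι → ℝ} (hx : ∀ i, x i = 0 ∨ x i = 1) :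
    ∃ m : ℤ, ∑ i, (a i : ℝ) * x i = m := by
  classical
  refine ⟨∑ i, if x i = 1 then a i else 0, ?_⟩
  push_cast
  refine Finset.sum_congr rfl fun i _ => ?_
  rcases hx i with h | h <;> simp [h]

theorem two_mul_intCast_ne_two_mul_intCast_add_one (m b : ℤ) : 2 * (m : ℝ) ≠ 2 * b + 1 := by
  norm_cast
  omega

theorem two_mul_intCast_le_two_mul_intCast_add_one_iff (m b : ℤ) :
    2 * (m : ℝ) ≤ 2 * b + 1 ↔ (m : ℝ) ≤ b := by
  norm_cast
  omega

theorem knapsack_forb_face_general (n : ℕ) (a : Fin n → ℤ) (b : ℤ)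
    (P : Set (Fin n → ℝ))
    (hP : P = {x | (∀ i, 0 ≤ x i ∧ x i ≤ 1) ∧
      2 * ∑ i, (a i : ℝ) * x i ≤ 2 * (b : ℝ) + 1})
    (F : Set (Fin n → ℝ))
    (hF : F = {x ∈ P | 2 * ∑ i, (a i : ℝ) * x i = 2 * (b : ℝ) + 1}) :
    (∀ x ∈ Set.extremePoints ℝ P,
      ((¬ ∀ i, x i = 0 ∨ x i = 1) ↔ 2 * ∑ i, (a i : ℝ) * x i = 2 * (b : ℝ) + 1)) ∧
    {x : Fin n → ℝ | (∀ i, x i = 0 ∨ x i = 1) ∧ ∑ i, (a i : ℝ) * x i ≤ (b : ℝ)} =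
      Set.extremePoints ℝ P \ Set.extremePoints ℝ F := by
  set cube := univ.pi fun _ : Fin n => Icc (0 : ℝ) 1
  have hP_cube : P = cube ∩ {x | 2 * ∑ i, (a i : ℝ) * x i ≤ 2 * (b : ℝ) + 1} := by
    ext; simp only [hP, cube, mem_inter_iff, mem_univ_pi, mem_Icc, mem_ofPred_eq]
  have hbinary_not_tight (x : Fin n → ℝ) (hx : ∀ i, x i = 0 ∨ x i = 1) :
      2 * ∑ i, (a i : ℝ) * x i ≠ 2 * (b : ℝ) + 1 := by
    obtain ⟨m, hm⟩ := exists_intCast_eq_sum_mul_of_binary a hx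
    exact hm ▸ two_mul_intCast_ne_two_mul_intCast_add_one m b
  have hvertex (x) (hx : x ∈ P.extremePoints ℝ) :
      (¬ ∀ i, x i = 0 ∨ x i = 1) ↔ 2 * ∑ i, (a i : ℝ) * x i = 2 * (b : ℝ) + 1 := by
    refine ⟨fun hfrac => by_contra fun hne => hfrac ?_,
      fun htight hbin => hbinary_not_tight x hbin htight⟩
    rw [hP_cube] at hx
    exact mem_extremePoints_unitCube_iff.mp <|
      mem_extremePoints_of_mem_extremePoints_inter_setOf_le (convex_pi fun _ _ => convex_Icc 0 1)
        (by fun_prop) hx (lt_of_le_of_ne hx.1.2 hne)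
  refine ⟨hvertex, Set.ext fun x => ⟨fun ⟨hbin, hle⟩ => ?_, fun ⟨hxP, hxF⟩ => ?_⟩⟩
  · have hxP : x ∈ P := hP_cube ▸
      ⟨(mem_extremePoints_unitCube_iff.mpr hbin).1, by rw [mem_ofPred_eq]; linarith⟩
    refine ⟨inter_extremePoints_subset_extremePoints_of_subset (hP_cube ▸ inter_subset_left)
      ⟨hxP, mem_extremePoints_unitCube_iff.mpr hbin⟩, fun hxF => ?_⟩
    exact hbinary_not_tight x hbin (hF ▸ hxF.1).2
  · have hbin : ∀ i, x i = 0 ∨ x i = 1 := by_contra fun hfrac => hxF <|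
      inter_extremePoints_subset_extremePoints_of_subset (hF ▸ sep_subset _ _)
        ⟨hF ▸ ⟨hxP.1, (hvertex x hxP).mp hfrac⟩, hxP⟩
    obtain ⟨m, hm⟩ := exists_intCast_eq_sum_mul_of_binary a hbin
    have hle := (hP ▸ hxP.1).2
    rw [hm] at hle
    exact ⟨hbin, hm ▸ (two_mul_intCast_le_two_mul_intCast_add_one_iff m b).mp hle⟩

/-- For a ∈ ℤⁿ₊, b ∈ ℤ₊ and P = {x ∈ [0,1]ⁿ : 2a⊤x ≤ 2b+1}: a vertex x of P is
non-integral iff 2a⊤x = 2b+1; consequently the knapsack set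
{x ∈ {0,1}ⁿ : a⊤x ≤ b} equals V(P) \ V(F), where F is the face 2a⊤x = 2b+1 of P. -/
theorem knapsack_forb_face (n : ℕ) (a : Fin n → ℤ) (ha : ∀ i, 0 ≤ a i) (b : ℤ) (hb : 0 ≤ b)
    (P : Set (Fin n → ℝ))
    (hP : P = {x | (∀ i, 0 ≤ x i ∧ x i ≤ 1) ∧
      2 * ∑ i, (a i : ℝ) * x i ≤ 2 * (b : ℝ) + 1})
    (F : Set (Fin n → ℝ))
    (hF : F = {x ∈ P | 2 * ∑ i, (a i : ℝ) * x i = 2 * (b : ℝ) + 1}) :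
    (∀ x ∈ Set.extremePoints ℝ P,
      ((¬ ∀ i, x i = 0 ∨ x i = 1) ↔ 2 * ∑ i, (a i : ℝ) * x i = 2 * (b : ℝ) + 1)) ∧
    {x : Fin n → ℝ | (∀ i, x i = 0 ∨ x i = 1) ∧ ∑ i, (a i : ℝ) * x i ≤ (b : ℝ)} =
      Set.extremePoints ℝ P \ Set.extremePoints ℝ F :=
  knapsack_forb_face_general n a b P hP F hF
end

section
/- For integers 0 ≤ a ≤ b ≤ 2^n − 1, the convex hull of K(a,b) = {x ∈ {0,1}^n : a ≤ Σ_{i=1}^n 2^{i−1} x_i ≤ b} is a polytope with O(n) facets; specifically, conv(K(a,b)) = {x ∈ [0,1]^n : Σ_{j∉N^a, j>i} x_j ≥ 1 − x_i for all i ∈ N^a, and Σ_{j∈N^b, j>i} (1−x_j) ≥ x_i for all i ∉ N^b}, where N^k = {i : (binary expansion of k) has bit 1 at position i}. -/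
/-!
Write `v(x) = ∑ i, 2 ^ i * x i`. Both families of inequalities are valid on `K(a,b)`: if
`a ≤ v(x)` and `x i = 0` at a bit `i` of `a`, then the highest position where the bits of `a`
and `v(x)` differ is some `j > i` with `x j = 1` and bit `j` of `a` clear (the colex order of bit
sets is the order of the values); symmetrically for `v(x) ≤ b`.

Conversely, induct on `n` by splitting off the last coordinate `t`. If the top bits of `a` and
`b` agree, `t` is forced to be that bit and the other coordinates lie in the polytope one dimension
lower. Otherwise `x = (1 - t) • (z, 0) + t • (y, 1)`, where `z j = min 1 (x j / (1 - t))` lies in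
the polytope of `[a, 2 ^ n - 1]` and `1 - y j = min 1 ((1 - x j) / t)` in that of
`[0, b - 2 ^ n]`: truncating at `1` preserves the inequalities since
`min 1 (∑ c) ≤ ∑ min 1 c` for `c ≥ 0`.
-/

open Finset

def binaryInterval (n a b : ℕ) : Set (Fin n → ℝ) :=
  {x | (∀ i, x i = 0 ∨ x i = 1) ∧ (a : ℝ) ≤ ∑ i : Fin n, 2 ^ (i : ℕ) * x i ∧
    ∑ i : Fin n, 2 ^ (i : ℕ) * x i ≤ (b : ℝ)}

def LowerBoundIneqs {n : ℕ} (a : ℕ) (x : Fin n → ℝ) : Prop :=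
  ∀ i : Fin n, Nat.testBit a i →
    1 - x i ≤ ∑ j ∈ univ.filter (fun j : Fin n => ¬ Nat.testBit a j ∧ (i : ℕ) < (j : ℕ)), x j

def UpperBoundIneqs {n : ℕ} (b : ℕ) (x : Fin n → ℝ) : Prop :=
  ∀ i : Fin n, ¬ Nat.testBit b i →
    x i ≤ ∑ j ∈ univ.filter (fun j : Fin n => Nat.testBit b j ∧ (i : ℕ) < (j : ℕ)), (1 - x j)

def intervalPolytope (n a b : ℕ) : Set (Fin n → ℝ) :=
  {x | (∀ i, 0 ≤ x i ∧ x i ≤ 1) ∧ LowerBoundIneqs a x ∧ UpperBoundIneqs b x}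

lemma Nat.lt_two_pow_of_not_testBit {a n : ℕ} (h : a < 2 ^ (n + 1)) (ha : ¬ a.testBit n) :
    a < 2 ^ n := by
  by_contra! h'
  obtain ⟨a, rfl⟩ := Nat.exists_eq_add_of_le h'
  rw [Nat.testBit_two_pow_add_eq, Nat.testBit_lt_two_pow (by omega)] at ha
  exact ha rfl

lemma exists_gt_of_sum_two_pow_le {s t : Finset ℕ} (h : ∑ k ∈ s, 2 ^ k ≤ ∑ k ∈ t, 2 ^ k)
    {i : ℕ} (his : i ∈ s) (hit : i ∉ t) : ∃ j ∈ t, j ∉ s ∧ i < j := by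
  rw [geomSum_le_geomSum_iff_toColex_le_toColex le_rfl] at h
  obtain ⟨j, hjt, hjs, hij⟩ := h his hit
  exact ⟨j, hjt, hjs, hij.lt_of_ne (by rintro rfl; exact hit hjt)⟩

lemma one_sub_le_sum_of_binary {ι R : Type*} [Ring R] [PartialOrder R] [IsOrderedRing R]
    {w : ι → R} (hw : ∀ j, w j = 0 ∨ w j = 1)
    {s : Finset ι} {i : ι} (h : w i = 0 → ∃ j ∈ s, w j = 1) : 1 - w i ≤ ∑ j ∈ s, w j := by
  have hw0 : ∀ j, 0 ≤ w j := fun j => by rcases hw j with h | h <;> simp [h]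
  rcases hw i with hi | hi
  · obtain ⟨j, hjs, hj⟩ := h hi
    rw [hi, sub_zero, ← hj]
    exact single_le_sum (fun j _ => hw0 j) hjs
  · rw [hi, sub_self]
    exact sum_nonneg fun j _ => hw0 j

lemma one_sub_min_le_sum_min {ι K : Type*} [Field K] [LinearOrder K] [IsStrictOrderedRing K]
    {s : Finset ι} {u : ι → K} (hu : ∀ j, 0 ≤ u j) {r : K} (hr : 0 < r) {i : ι}
    (h : r - u i ≤ ∑ j ∈ s, u j) :
    1 - min 1 (u i / r) ≤ ∑ j ∈ s, min 1 (u j / r) := by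
  have hmin : ∀ j, 0 ≤ min 1 (u j / r) := fun j => le_min zero_le_one (div_nonneg (hu j) hr.le)
  rw [sub_le_comm, le_min_iff]
  refine ⟨sub_le_self _ (sum_nonneg fun j _ => hmin j), ?_⟩
  by_cases hbig : ∃ j ∈ s, 1 ≤ u j / r
  · obtain ⟨j, hj, hj1⟩ := hbig
    have : 1 ≤ ∑ j ∈ s, min 1 (u j / r) :=
      (min_eq_left hj1).symm.le.trans (single_le_sum (fun k _ => hmin k) hj)
    linarith [div_nonneg (hu i) hr.le]
  · push Not at hbig
    rw [sum_congr rfl fun j hj => min_eq_right (hbig j hj).le, ← sum_div, sub_le_iff_le_add,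
      ← add_div, le_div_iff₀ hr]
    linarith

lemma one_sub_mul_min_add_mul_one_sub_min {K : Type*} [Field K] [LinearOrder K]
    [IsStrictOrderedRing K] {s t : K} (ht0 : 0 < t) (ht1 : t < 1) :
    (1 - t) * min 1 (s / (1 - t)) + t * (1 - min 1 ((1 - s) / t)) = s := by
  have h1t : 0 < 1 - t := by linarith
  rcases le_total s (1 - t) with h | h
  · rw [min_eq_right ((div_le_one h1t).2 h), min_eq_left ((le_div_iff₀ ht0).2 (by linarith))]
    field_simp
    ring
  · rw [min_eq_left ((le_div_iff₀ h1t).2 (by linarith)),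
      min_eq_right ((div_le_one ht0).2 (by linarith))]
    field_simp
    ring

lemma Fin.snoc_smul_add_smul {R M : Type*} [SMul R M] [Add M] {n : ℕ}
    (u v : R) (x y : Fin n → M) (c d : M) :
    Fin.snoc (α := fun _ => M) (u • x + v • y) (u • c + v • d) =
      u • Fin.snoc (α := fun _ => M) x c + v • Fin.snoc (α := fun _ => M) y d := by
  ext i
  induction i using Fin.lastCases <;> simp

lemma snoc_mem_convexHull {𝕜 E : Type*} [Semiring 𝕜] [PartialOrder 𝕜] [AddCommMonoid E]
    [Module 𝕜 E] {n : ℕ} {s : Set (Fin n → E)} {T : Set (Fin (n + 1) → E)} {c : E}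
    (hsT : ∀ y ∈ s, (Fin.snoc y c : Fin (n + 1) → E) ∈ T) {x : Fin n → E}
    (hx : x ∈ convexHull 𝕜 s) : (Fin.snoc x c : Fin (n + 1) → E) ∈ convexHull 𝕜 T := by
  refine convexHull_min (t := {y | (Fin.snoc y c : Fin (n + 1) → E) ∈ convexHull 𝕜 T})
    (fun y hy => subset_convexHull 𝕜 T (hsT y hy)) (fun y hy y' hy' u v hu hv huv => ?_) hx
  have := convex_convexHull 𝕜 T hy hy' hu hv huv
  rwa [← Fin.snoc_smul_add_smul, ← add_smul, huv, one_smul] at this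

section

variable {n a b : ℕ} {x : Fin n → ℝ} {t : ℝ}

noncomputable def binarySupport (x : Fin n → ℝ) : Finset ℕ :=
  (univ.filter fun j : Fin n => x j = 1).map Fin.valEmbedding

lemma mem_binarySupport {k : ℕ} : k ∈ binarySupport x ↔ ∃ j : Fin n, x j = 1 ∧ (j : ℕ) = k := by
  simp [binarySupport]

lemma sum_two_pow_mul_of_binary (hx : ∀ i, x i = 0 ∨ x i = 1) :
    ∑ i : Fin n, 2 ^ (i : ℕ) * x i = ((∑ k ∈ binarySupport x, 2 ^ k : ℕ) : ℝ) := by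
  rw [binarySupport, sum_map, sum_filter]
  push_cast
  refine sum_congr rfl fun i _ => ?_
  rcases hx i with h | h <;> simp [h]

theorem binaryInterval_subset_intervalPolytope (hb : b < 2 ^ n) :
    binaryInterval n a b ⊆ intervalPolytope n a b := by
  rintro x ⟨hx, hax, hxb⟩
  rw [sum_two_pow_mul_of_binary hx, ← sum_toFinset_bitIndices_two_pow a] at hax
  rw [sum_two_pow_mul_of_binary hx, ← sum_toFinset_bitIndices_two_pow b] at hxb
  replace hax := Nat.cast_le.1 hax
  replace hxb := Nat.cast_le.1 hxb
  refine ⟨fun i => by rcases hx i with h | h <;> simp [h], fun i hi => ?_, fun i hi => ?_⟩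
  · refine one_sub_le_sum_of_binary hx fun hxi => ?_
    obtain ⟨k, hk, hka, hik⟩ := exists_gt_of_sum_two_pow_le hax (by simpa using hi)
      (by simp [mem_binarySupport, Fin.val_inj, hxi])
    obtain ⟨j, hj, rfl⟩ := mem_binarySupport.1 hk
    exact ⟨j, mem_filter.2 ⟨mem_univ _, by simpa using hka, hik⟩, hj⟩
  · have hx' : ∀ j, 1 - x j = 0 ∨ 1 - x j = 1 := fun j => by
      rcases hx j with h | h <;> simp [h]
    suffices h : 1 - (1 - x i) ≤ ∑ j ∈ univ.filter
        (fun j : Fin n => Nat.testBit b j ∧ (i : ℕ) < (j : ℕ)), (1 - x j) by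
      simpa using h
    refine one_sub_le_sum_of_binary hx' fun hxi => ?_
    obtain ⟨k, hk, hkx, hik⟩ := exists_gt_of_sum_two_pow_le hxb
      (mem_binarySupport.2 ⟨i, by linarith, rfl⟩) (by simpa using hi)
    have hkb : Nat.testBit b k := by simpa using hk
    have hkn : k < n := (Nat.pow_lt_pow_iff_right (by norm_num)).1
      ((Nat.ge_two_pow_of_testBit hkb).trans_lt hb)
    refine ⟨⟨k, hkn⟩, mem_filter.2 ⟨mem_univ _, hkb, hik⟩, ?_⟩
    rcases hx ⟨k, hkn⟩ with h | h
    · simp [h]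
    · exact absurd (mem_binarySupport.2 ⟨_, h, rfl⟩) hkx

theorem convex_intervalPolytope (n a b : ℕ) : Convex ℝ (intervalPolytope n a b) := by
  rintro x ⟨hx, hxa, hxb⟩ y ⟨hy, hya, hyb⟩ u v hu hv huv
  have hmix : ∀ j, (u • x + v • y) j = u * x j + v * y j := fun j => rfl
  have hmix' : ∀ j, 1 - (u * x j + v * y j) = u * (1 - x j) + v * (1 - y j) := fun j => by
    linear_combination -huv
  refine ⟨fun i => ⟨?_, ?_⟩, fun i hi => ?_, fun i hi => ?_⟩
  · rw [hmix]; nlinarith [hx i, hy i]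
  · rw [hmix]; nlinarith [hx i, hy i]
  · simp only [hmix, sum_add_distrib, ← mul_sum]
    nlinarith [hxa i hi, hya i hi]
  · simp only [hmix, hmix', sum_add_distrib, ← mul_sum]
    nlinarith [hxb i hi, hyb i hi]

lemma sum_two_pow_mul_snoc (x : Fin n → ℝ) (c : ℝ) :
    ∑ i : Fin (n + 1), 2 ^ (i : ℕ) * (Fin.snoc x c : Fin (n + 1) → ℝ) i =
      ∑ i : Fin n, 2 ^ (i : ℕ) * x i + 2 ^ n * c := by
  simp [Fin.sum_univ_castSucc]

lemma binaryInterval_mono {a' b' : ℕ} (ha : a' ≤ a) (hb : b ≤ b') :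
    binaryInterval n a b ⊆ binaryInterval n a' b' := by
  rintro x ⟨hx, hax, hxb⟩
  exact ⟨hx, le_trans (by exact_mod_cast ha) hax, hxb.trans (by exact_mod_cast hb)⟩

lemma snoc_zero_mem_binaryInterval (hx : x ∈ binaryInterval n a b) :
    (Fin.snoc x 0 : Fin (n + 1) → ℝ) ∈ binaryInterval (n + 1) a b := by
  obtain ⟨hx, hax, hxb⟩ := hx
  refine ⟨fun i => ?_, ?_, ?_⟩
  · induction i using Fin.lastCases <;> simp [hx]
  all_goals simpa [sum_two_pow_mul_snoc]

lemma snoc_one_mem_binaryInterval (hx : x ∈ binaryInterval n a b) :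
    (Fin.snoc x 1 : Fin (n + 1) → ℝ) ∈ binaryInterval (n + 1) (2 ^ n + a) (2 ^ n + b) := by
  obtain ⟨hx, hax, hxb⟩ := hx
  refine ⟨fun i => ?_, ?_, ?_⟩
  · induction i using Fin.lastCases <;> simp [hx]
  all_goals push_cast; rw [sum_two_pow_mul_snoc]; linarith

lemma upperBoundIneqs_two_pow_add : UpperBoundIneqs (2 ^ n + b) x ↔ UpperBoundIneqs b x := by
  simp [UpperBoundIneqs, Nat.testBit_two_pow_add_gt]

lemma intervalPolytope_two_pow_add :
    intervalPolytope n (2 ^ n + a) (2 ^ n + b) = intervalPolytope n a b := by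
  ext x
  simp [intervalPolytope, LowerBoundIneqs, upperBoundIneqs_two_pow_add,
    Nat.testBit_two_pow_add_gt]

lemma LowerBoundIneqs.snoc_castSucc (h : LowerBoundIneqs a (Fin.snoc x t : Fin (n + 1) → ℝ))
    (i : Fin n) (hi : a.testBit i) :
    1 - x i ≤ ∑ j ∈ univ.filter (fun j : Fin n => ¬ a.testBit j ∧ (i : ℕ) < (j : ℕ)), x j +
      if ¬ a.testBit n then t else 0 := by
  have := h i.castSucc (by simpa using hi)
  rw [sum_filter, Fin.sum_univ_castSucc] at this
  simpa only [sum_filter, Fin.snoc_castSucc, Fin.snoc_last, Fin.val_castSucc, Fin.val_last,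
    i.is_lt, and_true] using this

lemma UpperBoundIneqs.snoc_castSucc (h : UpperBoundIneqs b (Fin.snoc x t : Fin (n + 1) → ℝ))
    (i : Fin n) (hi : ¬ b.testBit i) :
    x i ≤ ∑ j ∈ univ.filter (fun j : Fin n => b.testBit j ∧ (i : ℕ) < (j : ℕ)), (1 - x j) +
      if b.testBit n then 1 - t else 0 := by
  have := h i.castSucc (by simpa using hi)
  rw [sum_filter, Fin.sum_univ_castSucc] at this
  simpa only [sum_filter, Fin.snoc_castSucc, Fin.snoc_last, Fin.val_castSucc, Fin.val_last,
    i.is_lt, and_true] using this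

lemma LowerBoundIneqs.snoc_last (h : LowerBoundIneqs a (Fin.snoc x t : Fin (n + 1) → ℝ))
    (ha : a.testBit n) : 1 ≤ t := by
  have := h (Fin.last n) (by simpa using ha)
  rw [filter_false_of_mem fun j _ hj => (Fin.le_last j).not_gt hj.2] at this
  simpa using this

lemma UpperBoundIneqs.snoc_last (h : UpperBoundIneqs b (Fin.snoc x t : Fin (n + 1) → ℝ))
    (hb : ¬ b.testBit n) : t ≤ 0 := by
  have := h (Fin.last n) (by simpa using hb)
  rw [filter_false_of_mem fun j _ hj => (Fin.le_last j).not_gt hj.2] at this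
  simpa using this

lemma mem_intervalPolytope_of_snoc_mem
    (hx : (Fin.snoc x t : Fin (n + 1) → ℝ) ∈ intervalPolytope (n + 1) a b)
    (hat : ¬ a.testBit n → t = 0) (hbt : b.testBit n → t = 1) : x ∈ intervalPolytope n a b := by
  obtain ⟨hbox, hA, hB⟩ := hx
  refine ⟨fun i => by simpa using hbox i.castSucc, fun i hi => ?_, fun i hi => ?_⟩
  · have := hA.snoc_castSucc i hi
    split_ifs at this with han
    · rwa [add_zero] at this
    · rwa [hat han, add_zero] at this
  · have := hB.snoc_castSucc i hi
    split_ifs at this with hbn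
    · rwa [hbt hbn, sub_self, add_zero] at this
    · rwa [add_zero] at this

theorem exists_intervalPolytope_convex_combination
    (hx : (Fin.snoc x t : Fin (n + 1) → ℝ) ∈ intervalPolytope (n + 1) a b)
    (han : ¬ a.testBit n) (hbn : b.testBit n) :
    ∃ z ∈ intervalPolytope n a (2 ^ n - 1), ∃ y ∈ intervalPolytope n 0 b,
      x = (1 - t) • z + t • y := by
  obtain ⟨hbox, hA, hB⟩ := hx
  have hx : ∀ i, 0 ≤ x i ∧ x i ≤ 1 := fun i => by simpa using hbox i.castSucc
  obtain ⟨ht0, ht1⟩ : 0 ≤ t ∧ t ≤ 1 := by simpa using hbox (Fin.last n)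
  have hA (i : Fin n) (hi : a.testBit i) := hA.snoc_castSucc i hi
  have hB (i : Fin n) (hi : ¬ b.testBit i) := hB.snoc_castSucc i hi
  simp only [if_pos han, if_pos hbn] at hA hB
  have hupper : ∀ z : Fin n → ℝ, UpperBoundIneqs (2 ^ n - 1) z := fun z i hi => by simp at hi
  have hlower : ∀ y : Fin n → ℝ, LowerBoundIneqs 0 y := fun y i hi => by simp at hi
  rcases ht0.eq_or_lt with rfl | ht0
  · refine ⟨x, ⟨hx, fun i hi => by simpa using hA i hi, hupper x⟩, 0,
      ⟨by simp, hlower 0, fun i _ => by simp⟩, by simp⟩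
  rcases ht1.eq_or_lt with rfl | ht1
  · refine ⟨1, ⟨by simp, fun i _ => by simp, hupper 1⟩, x,
      ⟨hx, hlower x, fun i hi => by simpa using hB i hi⟩, by simp⟩
  have h1t : 0 < 1 - t := by linarith
  refine ⟨fun j => min 1 (x j / (1 - t)), ⟨fun j => ?_, fun i hi => ?_, hupper _⟩,
    fun j => 1 - min 1 ((1 - x j) / t), ⟨fun j => ?_, hlower _, fun i hi => ?_⟩, ?_⟩
  · exact ⟨le_min zero_le_one (div_nonneg (hx j).1 h1t.le), min_le_left _ _⟩
  · exact one_sub_min_le_sum_min (fun j => (hx j).1) h1t (by linarith [hA i hi])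
  · exact ⟨sub_nonneg.2 (min_le_left _ _),
      sub_le_self _ (le_min zero_le_one (div_nonneg (sub_nonneg.2 (hx j).2) ht0.le))⟩
  · simpa only [sub_sub_cancel] using one_sub_min_le_sum_min (u := fun j => 1 - x j)
      (fun j => sub_nonneg.2 (hx j).2) ht0 (by linarith [hB i hi])
  · ext j
    simp [one_sub_mul_min_add_mul_one_sub_min ht0 ht1]

end

theorem intervalPolytope_subset_convexHull {n a b : ℕ} (hab : a ≤ b) (hb : b < 2 ^ n) :
    intervalPolytope n a b ⊆ convexHull ℝ (binaryInterval n a b) := by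
  induction n generalizing a b with
  | zero =>
    intro x _
    obtain rfl : b = 0 := by simpa using hb
    obtain rfl : a = 0 := by omega
    exact subset_convexHull ℝ _ ⟨fun i => i.elim0, by simp, by simp⟩
  | succ n ih =>
    intro x hx
    obtain ⟨x, t, rfl⟩ : ∃ x' t, x = Fin.snoc x' t := ⟨_, _, (Fin.snoc_init_self x).symm⟩
    have ht : 0 ≤ t ∧ t ≤ 1 := by simpa using hx.1 (Fin.last n)
    have hpow : 2 ^ (n + 1) = 2 * 2 ^ n := pow_succ' 2 n
    by_cases hbn : b.testBit n
    · by_cases han : a.testBit n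
      · obtain rfl : t = 1 := le_antisymm ht.2 (hx.2.1.snoc_last han)
        have hxP := mem_intervalPolytope_of_snoc_mem hx (absurd han) fun _ => rfl
        obtain ⟨a, rfl⟩ := Nat.exists_eq_add_of_le (Nat.ge_two_pow_of_testBit han)
        obtain ⟨b, rfl⟩ := Nat.exists_eq_add_of_le (Nat.ge_two_pow_of_testBit hbn)
        rw [intervalPolytope_two_pow_add] at hxP
        exact snoc_mem_convexHull (fun y hy => snoc_one_mem_binaryInterval hy)
          (ih (by omega) (by omega) hxP)
      · obtain ⟨z, hz, y, ⟨hy, hy0, hyb⟩, rfl⟩ :=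
          exists_intervalPolytope_convex_combination hx han hbn
        have ha : a < 2 ^ n := Nat.lt_two_pow_of_not_testBit (by omega) han
        obtain ⟨b, rfl⟩ := Nat.exists_eq_add_of_le (Nat.ge_two_pow_of_testBit hbn)
        have hz' := snoc_mem_convexHull (c := (0 : ℝ)) (T := binaryInterval (n + 1) a (2 ^ n + b))
          (fun w hw => binaryInterval_mono le_rfl (by omega) (snoc_zero_mem_binaryInterval hw))
          (ih (by omega) (by omega) hz)
        have hy' := snoc_mem_convexHull (c := (1 : ℝ)) (T := binaryInterval (n + 1) a (2 ^ n + b))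
          (fun w hw => binaryInterval_mono (by omega) le_rfl (snoc_one_mem_binaryInterval hw))
          (ih (Nat.zero_le b) (by omega) ⟨hy, hy0, upperBoundIneqs_two_pow_add.1 hyb⟩)
        have := convex_convexHull ℝ _ hz' hy' (sub_nonneg.2 ht.2) ht.1 (sub_add_cancel 1 t)
        rwa [← Fin.snoc_smul_add_smul, smul_zero, zero_add, smul_eq_mul, mul_one] at this
    · have hb : b < 2 ^ n := Nat.lt_two_pow_of_not_testBit hb hbn
      obtain rfl : t = 0 := le_antisymm (hx.2.2.snoc_last hbn) ht.1
      exact snoc_mem_convexHull (fun y hy => snoc_zero_mem_binaryInterval hy)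
        (ih hab hb (mem_intervalPolytope_of_snoc_mem hx (fun _ => rfl) (absurd · hbn)))

/-- Explicit facet description of conv(K(a,b)), where
K(a,b) = {x ∈ {0,1}ⁿ : a ≤ Σ_i 2^i x_i ≤ b} and N^k is the support of the binary
expansion of k (given by `Nat.testBit`). -/
theorem convexHull_K_interval (n a b : ℕ) (hab : a ≤ b) (hb : b ≤ 2 ^ n - 1) :
    convexHull ℝ {x : Fin n → ℝ | (∀ i, x i = 0 ∨ x i = 1) ∧
        (a : ℝ) ≤ ∑ i : Fin n, 2 ^ (i : ℕ) * x i ∧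
        ∑ i : Fin n, 2 ^ (i : ℕ) * x i ≤ (b : ℝ)} =
      {x : Fin n → ℝ | (∀ i, 0 ≤ x i ∧ x i ≤ 1) ∧
        (∀ i : Fin n, Nat.testBit a i →
          1 - x i ≤ ∑ j ∈ Finset.univ.filter
            (fun j : Fin n => ¬ Nat.testBit a j ∧ (i : ℕ) < (j : ℕ)), x j) ∧
        (∀ i : Fin n, ¬ Nat.testBit b i →
          x i ≤ ∑ j ∈ Finset.univ.filter
            (fun j : Fin n => Nat.testBit b j ∧ (i : ℕ) < (j : ℕ)), (1 - x j))} := by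
  have hb : b < 2 ^ n := by have := Nat.one_le_two_pow (n := n); omega
  exact (convexHull_min (binaryInterval_subset_intervalPolytope hb)
    (convex_intervalPolytope n a b)).antisymm (intervalPolytope_subset_convexHull hab hb)
end

section
/- Every point in {0,1}^n \ X, for X a list of binary vectors, lies in a face of [0,1]^n of the form {v₁}×...×{v_k}×{1−v_{k+1}}×[0,1]^{n−k−1} for some v ∈ X and 0 ≤ k ≤ n−1, and each such face contains no element of X when k is the length of the longest common prefix between the point and elements of X. -/
/-- Let y ∈ {0,1}ⁿ \ X with X a nonempty list of binary vectors, and let k be the length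
of the longest common prefix between y and elements of X.  Then k ≤ n−1, the face
F(y) = {x : x_i = y_i, 1 ≤ i ≤ k+1} has the form {v₁}×⋯×{v_k}×{1−v_{k+1}}×[0,1]^{n−k−1}
for some v ∈ X (so y lies in such a face), and F(y) contains no element of X. -/
theorem longest_common_prefix_face (n : ℕ) (X : Finset (Fin n → Bool))
    (y : Fin n → Bool) (hy : y ∉ X) (k : ℕ)
    (hk : IsGreatest {j | ∃ v ∈ X, ∀ i : Fin n, (i : ℕ) < j → y i = v i} k) :
    k + 1 ≤ n ∧
    (∃ v ∈ X, (∀ i : Fin n, (i : ℕ) < k → y i = v i) ∧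
      ∀ h : k < n, y ⟨k, h⟩ = ! v ⟨k, h⟩) ∧
    ∀ v ∈ X, ∃ i : Fin n, (i : ℕ) < k + 1 ∧ y i ≠ v i := by
  obtain ⟨⟨v, hv, hpre⟩, hub⟩ := hk
  -- k < n
  have hkn : k + 1 ≤ n := by
    by_contra h
    push_neg at h
    have : y = v := by
      funext i
      exact hpre i (lt_of_lt_of_le i.isLt (Nat.le_of_lt_succ h))
    exact hy (this ▸ hv)
  -- no v' matches on first k+1 coordinates
  have hno : ∀ v' ∈ X, ∃ i : Fin n, (i : ℕ) < k + 1 ∧ y i ≠ v' i := by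
    intro v' hv'
    by_contra h
    push_neg at h
    have : k + 1 ≤ k := hub ⟨v', hv', fun i hi => h i hi⟩
    omega
  refine ⟨hkn, ⟨v, hv, fun i hi => hpre i hi, ?_⟩, hno⟩
  intro h
  obtain ⟨i, hi, hne⟩ := hno v hv
  have : (i : ℕ) = k := by
    rcases Nat.lt_succ_iff_lt_or_eq.mp hi with h' | h'
    · exact absurd (hpre i h') hne
    · exact h'
  have hieq : i = ⟨k, h⟩ := Fin.ext this
  rw [hieq] at hne
  revert hne
  cases y ⟨k, h⟩ <;> cases v ⟨k, h⟩ <;> simp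
end

section
/- Let P_1, ..., P_k be 0-1 polytopes and c_1, ..., c_k cost vectors, and suppose for each i = 1,...,k we have sets S_i ⊆ V(P_i) of k best vertices of P_i with respect to costs c_i (i.e., either S_i = V(P_i) with |V(P_i)| ≤ k, or |S_i| = k and max_{v∈S_i} c_i^⊤v ≤ min_{v∈V(P_i)\S_i} c_i^⊤v). If the all-different problem min Σ c_i^⊤x_i over distinct x_i ∈ V(P_i) is feasible, then it has an optimal solution with x_i ∈ S_i for all i. -/
/-- Dot product on ℝⁿ. -/
def rdot {n : ℕ} (c x : Fin n → ℝ) : ℝ := ∑ j, c j * x j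

/-- If S_i is a k-best set of vertices of the 0-1 polytope P_i w.r.t. cost c_i, and the
binary all-different problem (minimize Σ c_i⊤x_i over pairwise-distinct x_i ∈ V(P_i)) is
feasible, then it has an optimal solution with x_i ∈ S_i for all i. -/
theorem alldifferent_optimal_in_kbest (n k : ℕ)
    (V S : Fin k → Finset (Fin n → ℝ)) (c : Fin k → (Fin n → ℝ))
    (hne : ∀ i, (V i).Nonempty)
    (h01 : ∀ i, ∀ v ∈ V i, ∀ j, v j = 0 ∨ v j = 1)
    (hSsub : ∀ i, S i ⊆ V i)
    (hkbest : ∀ i, (S i = V i ∧ (V i).card ≤ k) ∨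
      ((S i).card = k ∧ ∀ u ∈ S i, ∀ w ∈ V i, w ∉ S i → rdot (c i) u ≤ rdot (c i) w))
    (hfeas : ∃ x : Fin k → (Fin n → ℝ), (∀ i, x i ∈ V i) ∧ Function.Injective x) :
    ∃ x : Fin k → (Fin n → ℝ), (∀ i, x i ∈ V i) ∧ Function.Injective x ∧
      (∀ i, x i ∈ S i) ∧
      ∀ y : Fin k → (Fin n → ℝ), (∀ i, y i ∈ V i) → Function.Injective y →
        ∑ i, rdot (c i) (x i) ≤ ∑ i, rdot (c i) (y i) := by
  classical
  let f : (Fin k → (Fin n → ℝ)) → ℝ := fun x => ∑ i, rdot (c i) (x i)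
  let F : Finset (Fin k → (Fin n → ℝ)) :=
    (Fintype.piFinset V).filter (fun x => Function.Injective x)
  have hmemF : ∀ x, x ∈ F ↔ (∀ i, x i ∈ V i) ∧ Function.Injective x := by
    intro x; simp [F, Fintype.mem_piFinset]
  obtain ⟨x₀, hx₀⟩ := hfeas
  have hFne : F.Nonempty := ⟨x₀, (hmemF x₀).2 hx₀⟩
  obtain ⟨m, hmF, hmin⟩ := F.exists_min_image f hFne
  let G : Finset _ := F.filter (fun x => f x = f m)
  have hGne : G.Nonempty := ⟨m, by simp [G, hmF]⟩
  let cnt : (Fin k → (Fin n → ℝ)) → ℕ :=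
    fun x => (Finset.univ.filter (fun i => x i ∈ S i)).card
  obtain ⟨x, hxG, hmax⟩ := G.exists_max_image cnt hGne
  have hxF : x ∈ F := (Finset.mem_filter.mp hxG).1
  have hxopt : f x = f m := (Finset.mem_filter.mp hxG).2
  obtain ⟨hxV, hxInj⟩ := (hmemF x).1 hxF
  have hxS : ∀ i, x i ∈ S i := by
    by_contra hcon
    push_neg at hcon
    obtain ⟨i₀, hi₀⟩ := hcon
    rcases hkbest i₀ with ⟨hSeq, _⟩ | ⟨hcard, hle⟩
    · exact hi₀ (hSeq ▸ hxV i₀)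
    · have himg : ((Finset.univ.erase i₀).image x).card ≤ k - 1 := by
        calc ((Finset.univ.erase i₀).image x).card ≤ (Finset.univ.erase i₀).card :=
              Finset.card_image_le
          _ = k - 1 := by simp [Finset.card_erase_of_mem]
      have hpos : 1 ≤ k := i₀.pos
      have hsd : (S i₀ \ (Finset.univ.erase i₀).image x).Nonempty := by
        apply Finset.card_pos.mp
        have h1 := Finset.le_card_sdiff ((Finset.univ.erase i₀).image x) (S i₀)
        omega
      obtain ⟨u, hu⟩ := hsd
      rw [Finset.mem_sdiff] at hu
      obtain ⟨huS, huimg⟩ := hu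
      let x' := Function.update x i₀ u
      have hx'i₀ : x' i₀ = u := Function.update_self i₀ u x
      have hx'ne : ∀ j, j ≠ i₀ → x' j = x j := fun j hj => Function.update_of_ne hj u x
      have hx'V : ∀ i, x' i ∈ V i := by
        intro i
        by_cases h : i = i₀
        · rw [h, hx'i₀]; exact hSsub i₀ huS
        · rw [hx'ne i h]; exact hxV i
      have humem : ∀ j, j ≠ i₀ → u ≠ x j := by
        intro j hj heq
        exact huimg (Finset.mem_image.mpr ⟨j, Finset.mem_erase.mpr ⟨hj, Finset.mem_univ j⟩, heq.symm⟩)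
      have hx'Inj : Function.Injective x' := by
        intro a b hab
        by_cases ha : a = i₀ <;> by_cases hb : b = i₀
        · rw [ha, hb]
        · subst ha; rw [hx'i₀, hx'ne b hb] at hab
          exact absurd hab (humem b hb)
        · subst hb; rw [hx'i₀, hx'ne a ha] at hab
          exact absurd hab.symm (humem a ha)
        · rw [hx'ne a ha, hx'ne b hb] at hab
          exact hxInj hab
      have hsum : ∀ z : Fin k → (Fin n → ℝ),
          f z = rdot (c i₀) (z i₀) + ∑ i ∈ Finset.univ.erase i₀, rdot (c i) (z i) := by
        intro z
        exact (Finset.add_sum_erase _ _ (Finset.mem_univ i₀)).symm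
      have hcost : f x' ≤ f x := by
        rw [hsum x', hsum x]
        have heq : ∑ i ∈ Finset.univ.erase i₀, rdot (c i) (x' i)
            = ∑ i ∈ Finset.univ.erase i₀, rdot (c i) (x i) := by
          apply Finset.sum_congr rfl
          intro j hj
          rw [hx'ne j (Finset.ne_of_mem_erase hj)]
        rw [heq, hx'i₀]
        exact add_le_add_left (hle u huS (x i₀) (hxV i₀) hi₀) _
      have hx'F : x' ∈ F := (hmemF x').2 ⟨hx'V, hx'Inj⟩
      have hx'opt : f x' = f m := le_antisymm (hxopt ▸ hcost) (hmin x' hx'F)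
      have hx'G : x' ∈ G := Finset.mem_filter.mpr ⟨hx'F, hx'opt⟩
      have hi₀notin : i₀ ∉ Finset.univ.filter (fun i => x i ∈ S i) := by simp [hi₀]
      have hsub : insert i₀ (Finset.univ.filter (fun i => x i ∈ S i)) ⊆
          Finset.univ.filter (fun i => x' i ∈ S i) := by
        intro j hj
        rcases Finset.mem_insert.mp hj with rfl | hj
        · simp only [Finset.mem_filter, Finset.mem_univ, true_and]
          rw [hx'i₀]; exact huS
        · rw [Finset.mem_filter] at hj ⊢
          refine ⟨Finset.mem_univ _, ?_⟩
          by_cases h : j = i₀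
          · rw [h, hx'i₀]; exact huS
          · rw [hx'ne j h]; exact hj.2
      have hlt : cnt x < cnt x' := by
        have h1 : (insert i₀ (Finset.univ.filter (fun i => x i ∈ S i))).card
            = cnt x + 1 := Finset.card_insert_of_notMem hi₀notin
        have h2 := Finset.card_le_card hsub
        simp only [cnt] at *
        omega
      exact absurd (hmax x' hx'G) (by omega)
  refine ⟨x, hxV, hxInj, hxS, ?_⟩
  intro y hyV hyInj
  have hyF : y ∈ F := (hmemF y).2 ⟨hyV, hyInj⟩
  exact le_of_eq_of_le hxopt (hmin y hyF)
end

section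
/- For any finite set X ⊆ {0,...,r−1}^n, the complement {0,...,r−1}^n \ X can be written as a union of at most 2n|X| integer boxes, i.e., sets of the form [l,u] ∩ Z^n with l, u ∈ Z^n, l ≤ u, each box disjoint from X. -/
set_option maxHeartbeats 1000000

lemma oneD (a : ℤ) : ∀ k : ℕ, ∀ b : ℤ, ∀ S : Finset ℤ, S.card = k →
    (∀ s ∈ S, a ≤ s ∧ s ≤ b) →
    ∃ I : Finset (ℤ × ℤ), I.card ≤ S.card + 1 ∧ (∀ p ∈ I, p.1 ≤ p.2) ∧
      {x : ℤ | (a ≤ x ∧ x ≤ b) ∧ x ∉ S} = ⋃ p ∈ I, Set.Icc p.1 p.2 := by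
  intro k
  induction k with
  | zero =>
    intro b S hcard _
    rw [Finset.card_eq_zero] at hcard
    subst hcard
    by_cases hab : a ≤ b
    · refine ⟨{(a, b)}, by simp, by simp [hab], ?_⟩
      ext x; simp [Set.mem_Icc]
    · refine ⟨∅, by simp, by simp, ?_⟩
      ext x; simp only [Set.mem_setOf_eq, Finset.notMem_empty, not_false_iff, and_true,
        Finset.notMem_empty, Set.iUnion_of_empty, Set.iUnion_empty, Set.mem_empty_iff_false,
        iff_false]
      omega
  | succ k ih =>
    intro b S hcard hS
    have hne : S.Nonempty := Finset.card_pos.mp (by omega)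
    set m := S.max' hne with hm
    have hmS : m ∈ S := S.max'_mem hne
    have hma : a ≤ m := (hS m hmS).1
    have hmb : m ≤ b := (hS m hmS).2
    have hmax : ∀ s ∈ S, s ≤ m := fun s hs => S.le_max' s hs
    set S' := S.erase m with hS'
    have hcard' : S'.card = k := by
      rw [hS', Finset.card_erase_of_mem hmS, hcard]; omega
    have hS'b : ∀ s ∈ S', a ≤ s ∧ s ≤ m - 1 := by
      intro s hs
      have h1 := hS s (Finset.mem_of_mem_erase hs)
      have h2 := hmax s (Finset.mem_of_mem_erase hs)
      have h3 : s ≠ m := Finset.ne_of_mem_erase hs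
      exact ⟨h1.1, by omega⟩
    obtain ⟨I', hI'card, hI'le, hI'un⟩ := ih (m - 1) S' hcard' hS'b
    have hmem : ∀ x : ℤ, x ∈ S ↔ x = m ∨ x ∈ S' := by
      intro x
      constructor
      · intro hx; by_cases h : x = m
        · exact Or.inl h
        · exact Or.inr (Finset.mem_erase.mpr ⟨h, hx⟩)
      · rintro (rfl | hx); exact hmS; exact Finset.mem_of_mem_erase hx
    by_cases hb : m + 1 ≤ b
    · refine ⟨insert (m + 1, b) I', ?_, ?_, ?_⟩
      · calc (insert (m + 1, b) I').card ≤ I'.card + 1 := Finset.card_insert_le _ _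
          _ ≤ S.card + 1 := by omega
      · intro p hp
        rcases Finset.mem_insert.mp hp with rfl | hp
        · exact hb
        · exact hI'le p hp
      · ext x
        simp only [Set.mem_setOf_eq, Finset.mem_insert, Set.mem_iUnion, Set.mem_Icc]
        constructor
        · rintro ⟨⟨hax, hxb⟩, hxS⟩
          by_cases hxm : x ≤ m - 1
          · have : x ∈ {x : ℤ | (a ≤ x ∧ x ≤ m - 1) ∧ x ∉ S'} := by
              refine ⟨⟨hax, hxm⟩, fun h => hxS ((hmem x).mpr (Or.inr h))⟩
            rw [hI'un] at this
            simp only [Set.mem_iUnion, Set.mem_Icc] at this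
            obtain ⟨p, hp, hx⟩ := this
            exact ⟨p, Or.inr hp, hx⟩
          · have hxm' : x ≠ m := fun h => hxS (h ▸ hmS)
            exact ⟨(m + 1, b), Or.inl rfl, by dsimp; omega⟩
        · rintro ⟨p, hp | hp, hx1, hx2⟩
          · subst hp; dsimp at hx1 hx2
            refine ⟨⟨by omega, by omega⟩, fun h => ?_⟩
            have := hmax x h; omega
          · have : x ∈ ⋃ p ∈ I', Set.Icc p.1 p.2 := by
              simp only [Set.mem_iUnion, Set.mem_Icc]; exact ⟨p, hp, hx1, hx2⟩
            rw [← hI'un] at this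
            obtain ⟨⟨hax, hxm⟩, hxS'⟩ := this
            refine ⟨⟨hax, by omega⟩, fun h => ?_⟩
            rcases (hmem x).mp h with rfl | h
            · omega
            · exact hxS' h
    · refine ⟨I', by omega, hI'le, ?_⟩
      rw [← hI'un]
      ext x
      simp only [Set.mem_setOf_eq]
      constructor
      · rintro ⟨⟨hax, hxb⟩, hxS⟩
        have hxm : x ≠ m := fun h => hxS (h ▸ hmS)
        exact ⟨⟨hax, by omega⟩, fun h => hxS ((hmem x).mpr (Or.inr h))⟩
      · rintro ⟨⟨hax, hxm⟩, hxS'⟩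
        refine ⟨⟨hax, by omega⟩, fun h => ?_⟩
        rcases (hmem x).mp h with rfl | h
        · omega
        · exact hxS' h

lemma boxes_aux : ∀ (n : ℕ) (r : ℤ), 2 ≤ r → ∀ (X : Finset (Fin n → ℤ)), X.Nonempty →
    (∀ v ∈ X, ∀ i, 0 ≤ v i ∧ v i ≤ r - 1) →
    ∃ B : Finset ((Fin n → ℤ) × (Fin n → ℤ)),
      B.card ≤ 2 * n * X.card ∧
      (∀ p ∈ B, ∀ i, p.1 i ≤ p.2 i) ∧
      {x : Fin n → ℤ | ∀ i, 0 ≤ x i ∧ x i ≤ r - 1} \ ↑X =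
        ⋃ p ∈ B, {x : Fin n → ℤ | ∀ i, p.1 i ≤ x i ∧ x i ≤ p.2 i} := by
  intro n
  induction n with
  | zero =>
    intro r hr X hXne hX
    refine ⟨∅, by simp, by simp, ?_⟩
    obtain ⟨v, hv⟩ := hXne
    ext x
    simp only [Set.mem_diff, Set.mem_setOf_eq, Finset.coe_sort_coe, Set.mem_iUnion,
      Finset.mem_coe, Finset.notMem_empty, Set.iUnion_of_empty, Set.iUnion_empty,
      Set.mem_empty_iff_false, iff_false, not_and, not_not]
    intro _
    have : x = v := Subsingleton.elim x v
    exact this ▸ hv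
  | succ n ih =>
    intro r hr X hXne hX
    set Y := X.image Fin.init with hYdef
    have hYne : Y.Nonempty := hXne.image _
    have hY : ∀ w ∈ Y, ∀ i, 0 ≤ w i ∧ w i ≤ r - 1 := by
      intro w hw i
      obtain ⟨v, hv, rfl⟩ := Finset.mem_image.mp hw
      exact hX v hv i.castSucc
    obtain ⟨B', hB'card, hB'le, hB'un⟩ := ih r hr Y hYne hY
    -- fibers
    set F : (Fin n → ℤ) → Finset ℤ :=
      fun w => (X.filter (fun v => Fin.init v = w)).image (fun v => v (Fin.last n)) with hFdef
    have hF : ∀ w, ∀ s ∈ F w, 0 ≤ s ∧ s ≤ r - 1 := by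
      intro w s hs
      obtain ⟨v, hv, rfl⟩ := Finset.mem_image.mp hs
      exact hX v (Finset.mem_of_mem_filter v hv) (Fin.last n)
    have h1 : ∀ w, ∃ I : Finset (ℤ × ℤ), I.card ≤ (F w).card + 1 ∧ (∀ p ∈ I, p.1 ≤ p.2) ∧
        {x : ℤ | (0 ≤ x ∧ x ≤ r - 1) ∧ x ∉ F w} = ⋃ p ∈ I, Set.Icc p.1 p.2 :=
      fun w => oneD 0 (F w).card (r - 1) (F w) rfl (hF w)
    choose I hIcard hIle hIun using h1
    set B1 : Finset ((Fin (n+1) → ℤ) × (Fin (n+1) → ℤ)) :=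
      B'.image (fun p => (Fin.snoc p.1 0, Fin.snoc p.2 (r-1))) with hB1def
    set B2 : Finset ((Fin (n+1) → ℤ) × (Fin (n+1) → ℤ)) :=
      Y.biUnion (fun w => (I w).image (fun q => (Fin.snoc w q.1, Fin.snoc w q.2))) with hB2def
    refine ⟨B1 ∪ B2, ?_, ?_, ?_⟩
    · -- cardinality
      have hFcard : ∀ w, (F w).card = (X.filter (fun v => Fin.init v = w)).card := by
        intro w
        apply Finset.card_image_of_injOn
        intro v1 h1 v2 h2 hlast
        have e1 : Fin.init v1 = w := (Finset.mem_filter.mp h1).2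
        have e2 : Fin.init v2 = w := (Finset.mem_filter.mp h2).2
        calc v1 = Fin.snoc (Fin.init v1) (v1 (Fin.last n)) := (Fin.snoc_init_self v1).symm
          _ = Fin.snoc (Fin.init v2) (v2 (Fin.last n)) := by
              simp only at hlast; rw [e1, e2, hlast]
          _ = v2 := Fin.snoc_init_self v2
      have hsum : ∑ w ∈ Y, (F w).card = X.card := by
        rw [Finset.card_eq_sum_card_image Fin.init X]
        exact Finset.sum_congr rfl (fun w _ => hFcard w)
      have hB2card : B2.card ≤ X.card + Y.card := by
        calc B2.card ≤ ∑ w ∈ Y, ((I w).image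
              (fun q => ((Fin.snoc w q.1 : Fin (n+1) → ℤ),
                (Fin.snoc w q.2 : Fin (n+1) → ℤ)))).card := Finset.card_biUnion_le
          _ ≤ ∑ w ∈ Y, ((F w).card + 1) := by
              apply Finset.sum_le_sum
              intro w _
              exact le_trans (Finset.card_image_le) (hIcard w)
          _ = X.card + Y.card := by rw [Finset.sum_add_distrib, hsum]; simp
      have hYX : Y.card ≤ X.card := Finset.card_image_le
      calc (B1 ∪ B2).card ≤ B1.card + B2.card := Finset.card_union_le _ _
        _ ≤ B'.card + (X.card + Y.card) := by
            have hB1c : B1.card ≤ B'.card := by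
              rw [hB1def]; exact Finset.card_image_le
            omega
        _ ≤ 2 * n * Y.card + (X.card + Y.card) := by omega
        _ ≤ 2 * (n + 1) * X.card := by nlinarith
    · -- l ≤ u
      intro p hp i
      rcases Finset.mem_union.mp hp with hp | hp
      · obtain ⟨q, hq, rfl⟩ := Finset.mem_image.mp hp
        refine Fin.lastCases ?_ ?_ i
        · simp only [Fin.snoc_last]; omega
        · intro j; simp only [Fin.snoc_castSucc]; exact hB'le q hq j
      · obtain ⟨w, hw, hq⟩ := Finset.mem_biUnion.mp hp
        obtain ⟨q, hq2, rfl⟩ := Finset.mem_image.mp hq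
        refine Fin.lastCases ?_ ?_ i
        · simp only [Fin.snoc_last]; exact hIle w q hq2
        · intro j; simp only [Fin.snoc_castSucc]; exact le_refl _
    · -- union equality
      ext x
      simp only [Set.mem_diff, Set.mem_setOf_eq, Set.mem_iUnion, Finset.mem_coe,
        Finset.mem_union]
      constructor
      · rintro ⟨hbd, hxX⟩
        by_cases hwY : Fin.init x ∈ Y
        · -- fiber case
          have hbF : x (Fin.last n) ∉ F (Fin.init x) := by
            intro h
            obtain ⟨v, hv, hlast⟩ := Finset.mem_image.mp h
            have hinit : Fin.init v = Fin.init x := (Finset.mem_filter.mp hv).2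
            have : v = x := by
              calc v = Fin.snoc (Fin.init v) (v (Fin.last n)) := (Fin.snoc_init_self v).symm
                _ = Fin.snoc (Fin.init x) (x (Fin.last n)) := by rw [hinit, hlast]
                _ = x := Fin.snoc_init_self x
            exact hxX (this ▸ (Finset.mem_filter.mp hv).1)
          have hmem : x (Fin.last n) ∈
              {y : ℤ | (0 ≤ y ∧ y ≤ r - 1) ∧ y ∉ F (Fin.init x)} :=
            ⟨⟨(hbd (Fin.last n)).1, (hbd (Fin.last n)).2⟩, hbF⟩
          rw [hIun (Fin.init x)] at hmem
          simp only [Set.mem_iUnion, Set.mem_Icc] at hmem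
          obtain ⟨q, hq, hb1, hb2⟩ := hmem
          refine ⟨(Fin.snoc (Fin.init x) q.1, Fin.snoc (Fin.init x) q.2),
            Or.inr (Finset.mem_biUnion.mpr ⟨_, hwY, Finset.mem_image.mpr ⟨q, hq, rfl⟩⟩), ?_⟩
          intro i
          refine Fin.lastCases ?_ ?_ i
          · simp only [Fin.snoc_last]; exact ⟨hb1, hb2⟩
          · intro j
            simp only [Fin.snoc_castSucc, Fin.init]
            exact ⟨le_refl _, le_refl _⟩
        · -- projection case
          have hmem : Fin.init x ∈ {w : Fin n → ℤ | ∀ i, 0 ≤ w i ∧ w i ≤ r - 1} \ ↑Y := by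
            refine ⟨fun j => ?_, hwY⟩
            exact hbd j.castSucc
          rw [hB'un] at hmem
          simp only [Set.mem_iUnion, Set.mem_setOf_eq, Finset.mem_coe] at hmem
          obtain ⟨q, hq, hbox⟩ := hmem
          refine ⟨(Fin.snoc q.1 0, Fin.snoc q.2 (r-1)),
            Or.inl (Finset.mem_image.mpr ⟨q, hq, rfl⟩), ?_⟩
          intro i
          refine Fin.lastCases ?_ ?_ i
          · simp only [Fin.snoc_last]; exact ⟨(hbd (Fin.last n)).1, (hbd (Fin.last n)).2⟩
          · intro j
            simp only [Fin.snoc_castSucc]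
            exact hbox j
      · rintro ⟨p, hp | hp, hbox⟩
        · obtain ⟨q, hq, rfl⟩ := Finset.mem_image.mp hp
          have hinitmem : Fin.init x ∈ ⋃ p ∈ B',
              {w : Fin n → ℤ | ∀ i, p.1 i ≤ w i ∧ w i ≤ p.2 i} := by
            simp only [Set.mem_iUnion, Set.mem_setOf_eq]
            refine ⟨q, hq, fun j => ?_⟩
            have := hbox j.castSucc
            simpa only [Fin.snoc_castSucc, Fin.init] using this
          rw [← hB'un] at hinitmem
          obtain ⟨hbd', hnY⟩ := hinitmem
          have hlast := hbox (Fin.last n)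
          simp only [Fin.snoc_last] at hlast
          refine ⟨?_, ?_⟩
          · intro i
            refine Fin.lastCases ?_ ?_ i
            · omega
            · intro j; exact hbd' j
          · intro hxX
            exact hnY (Finset.mem_image.mpr ⟨x, hxX, rfl⟩)
        · obtain ⟨w, hw, hq⟩ := Finset.mem_biUnion.mp hp
          obtain ⟨q, hq2, rfl⟩ := Finset.mem_image.mp hq
          have hinit : Fin.init x = w := by
            funext j
            have := hbox j.castSucc
            simp only [Fin.snoc_castSucc] at this
            have : x j.castSucc = w j := le_antisymm this.2 this.1
            simpa [Fin.init] using this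
          have hlast := hbox (Fin.last n)
          simp only [Fin.snoc_last] at hlast
          have hlastmem : x (Fin.last n) ∈
              {y : ℤ | (0 ≤ y ∧ y ≤ r - 1) ∧ y ∉ F w} := by
            rw [hIun w]
            simp only [Set.mem_iUnion, Set.mem_Icc]
            exact ⟨q, hq2, hlast.1, hlast.2⟩
          obtain ⟨⟨h0, h1⟩, hnF⟩ := hlastmem
          refine ⟨?_, ?_⟩
          · intro i
            refine Fin.lastCases ?_ ?_ i
            · exact ⟨h0, h1⟩
            · intro j
              have hwj := hY w hw j
              have : x j.castSucc = w j := by rw [← hinit]; rfl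
              omega
          · intro hxX
            exact hnF (Finset.mem_image.mpr ⟨x, Finset.mem_filter.mpr ⟨hxX, hinit⟩, rfl⟩)

/-- For a nonempty finite X ⊆ {0,…,r−1}ⁿ, the complement {0,…,r−1}ⁿ \ X is the union of
at most 2n|X| integer boxes [l,u] ∩ ℤⁿ, each disjoint from X. -/
theorem complement_union_boxes (n : ℕ) (r : ℤ) (hr : 2 ≤ r)
    (X : Finset (Fin n → ℤ)) (hXne : X.Nonempty)
    (hX : ∀ v ∈ X, ∀ i, 0 ≤ v i ∧ v i ≤ r - 1) :
    ∃ B : Finset ((Fin n → ℤ) × (Fin n → ℤ)),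
      B.card ≤ 2 * n * X.card ∧
      (∀ p ∈ B, ∀ i, p.1 i ≤ p.2 i) ∧
      (∀ p ∈ B, ∀ v ∈ X, ¬ (∀ i, p.1 i ≤ v i ∧ v i ≤ p.2 i)) ∧
      {x : Fin n → ℤ | ∀ i, 0 ≤ x i ∧ x i ≤ r - 1} \ ↑X =
        ⋃ p ∈ B, {x : Fin n → ℤ | ∀ i, p.1 i ≤ x i ∧ x i ≤ p.2 i} := by
  obtain ⟨B, hcard, hle, hun⟩ := boxes_aux n r hr X hXne hX
  refine ⟨B, hcard, hle, ?_, hun⟩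
  intro p hp v hv hbox
  have : v ∈ {x : Fin n → ℤ | ∀ i, 0 ≤ x i ∧ x i ≤ r - 1} \ ↑X := by
    rw [hun]
    exact Set.mem_iUnion₂.mpr ⟨p, hp, hbox⟩
  exact this.2 hv
end
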